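/- arXiv:2310.07352 — 2 statements merged into one kernel-verified Lean document; each statement's English description precedes it below -/
import Mathlib

section
/- If two logistic diffusion trajectories satisfy θ'_{γ+1} = θ'_γ + a_γ d'_γ (1 − θ'_γ/K) and θ_{γ+1} = θ_γ + a_γ d_γ (1 − θ_γ/K) with identical initial value θ'_0 = θ_0 ∈ [0, K), a_γ ≥ 0, 1 ≤ d_γ ≤ d'_γ, and a_γ d'_γ ≤ K − θ'_γ for all γ, then θ'_γ ≥ θ_γ for all γ. -/
/-- Monotonicity of the logistic diffusion trajectory in the
charging-convenience levels: a pointwise larger convenience sequence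
yields a pointwise larger adoption trajectory. -/
theorem logistic_diffusion_monotone_in_convenience
    (K : ℝ) (hK : 0 < K) (θ θ' a d d' : ℕ → ℝ)
    (h0 : θ' 0 = θ 0) (hθ0 : 0 ≤ θ 0) (hθ0K : θ 0 < K)
    (ha : ∀ γ, 0 ≤ a γ)
    (hd : ∀ γ, 1 ≤ d γ) (hdd : ∀ γ, d γ ≤ d' γ)
    (had' : ∀ γ, a γ * d' γ ≤ K - θ' γ)
    (hrec : ∀ γ, θ (γ + 1) = θ γ + a γ * d γ * (1 - θ γ / K))
    (hrec' : ∀ γ, θ' (γ + 1) = θ' γ + a γ * d' γ * (1 - θ' γ / K)) :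
    ∀ γ, θ γ ≤ θ' γ := by
  suffices h : ∀ γ, 0 ≤ θ γ ∧ θ γ ≤ θ' γ from fun γ => (h γ).2
  intro γ
  induction γ with
  | zero => exact ⟨hθ0, h0.ge⟩
  | succ n ih =>
    obtain ⟨hθn, hle⟩ := ih
    have hθ'n : 0 ≤ θ' n := hθn.trans hle
    have hd0 : (0:ℝ) ≤ d n := le_trans zero_le_one (hd n)
    have had : a n * d n ≤ a n * d' n :=
      mul_le_mul_of_nonneg_left (hdd n) (ha n)
    have hθ'K : θ' n ≤ K := by
      have h1 := had' n
      have h2 : 0 ≤ a n * d' n := mul_nonneg (ha n) (hd0.trans (hdd n))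
      linarith
    have hadK : a n * d n ≤ K := by
      have := had' n; linarith
    constructor
    · rw [hrec n]
      have h1 : 0 ≤ 1 - θ n / K := by
        have : θ n / K ≤ 1 := by
          rw [div_le_one hK]; linarith
        linarith
      have := mul_nonneg (mul_nonneg (ha n) hd0) h1
      linarith
    · rw [hrec n, hrec' n]
      have key : θ' n + a n * d' n * (1 - θ' n / K) - (θ n + a n * d n * (1 - θ n / K))
          = (θ' n - θ n) * (1 - a n * d n / K) + a n * (d' n - d n) * (1 - θ' n / K) := by
        field_simp; ring
      have t1 : 0 ≤ (θ' n - θ n) * (1 - a n * d n / K) := by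
        apply mul_nonneg (by linarith)
        have : a n * d n / K ≤ 1 := by rw [div_le_one hK]; exact hadK
        linarith
      have t2 : 0 ≤ a n * (d' n - d n) * (1 - θ' n / K) := by
        apply mul_nonneg (mul_nonneg (ha n) (by linarith [hdd n]))
        have : θ' n / K ≤ 1 := by rw [div_le_one hK]; exact hθ'K
        linarith
      linarith [key]
end

section
/- Conversely, if an EV with driving range D starting fully charged can traverse every arc of path od without battery depletion given charging stations at nodes {i : x_i = 1}, then for every arc (j,k) on the path, ∑_{i ∈ K_od(j,k)} x_i ≥ 1 whenever the origin itself is not within range of k, i.e., arc coverage constraints are necessary. -/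
/-- Necessity of arc-coverage constraints: if an EV with range D
starting fully charged can traverse every arc of the path without
battery depletion (i.e., at every node some recharge point — a
station or the origin — lies within range D behind it), then every
arc (j, j+1) whose endpoint is out of range of the origin must be
covered by an open station within range D. -/
theorem acpc_traversable_implies_coverage
    (n : ℕ) (pos : ℕ → ℝ) (D : ℝ) (hD : 0 < D)
    (x : ℕ → ℝ) (hx : ∀ i, x i = 0 ∨ x i = 1)
    (hmono : ∀ j k, j ≤ k → k ≤ n → pos j ≤ pos k)
    (htrav : ∀ k, 1 ≤ k → k ≤ n →
      ∃ i < k, (i = 0 ∨ x i = 1) ∧ pos k - pos i ≤ D) :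
    ∀ j < n, ¬ (pos (j + 1) - pos 0 ≤ D) →
      ∃ i ≤ j, x i = 1 ∧ pos (j + 1) - pos i ≤ D := by
  intro j hj h0
  obtain ⟨i, hik, hi, hle⟩ := htrav (j+1) (by omega) (by omega)
  rcases hi with rfl | hxi
  · exact absurd hle h0
  · exact ⟨i, by omega, hxi, hle⟩
end
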